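/- Let $\mu$ be a locally finite Borel measure on $\mathbb{R}$ and let $\lambda > 0$. Then the dyadic maximal operator satisfies the weighted weak-type $(1,1)$ inequality: for every nonnegative weight $w$ and every $f \in L^1(\mu)$, $\int_{\{M^{\mathcal{D}}_{\mu} f > \lambda\}} w \, d\mu \leq \frac{1}{\lambda} \int_{\mathbb{R}} |f| \, (M^{\mathcal{D}}_{\mu} w) \, d\mu$. -/

import Mathlib

/-!
Stopping-time argument. The set `{M f > λ}` is the union of the dyadic cubes `I` with
`λ < ⨍_I |f|`. On such a cube `λ μ(I) ≤ ∫_I |f|`, hence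
`∫_I w = (⨍_I w) μ(I) ≤ λ⁻¹ (⨍_I w) ∫_I |f| ≤ λ⁻¹ ∫_I |f| M w`, since `M w ≥ ⨍_I w` on `I`.
Summing over the maximal such cubes, which are pairwise disjoint, gives the bound. Maximal cubes
need not exist, so one first keeps only cubes of generation `≥ N` and then lets `N → -∞`.
-/

open MeasureTheory Set ENNReal
open scoped NNReal

/-- The standard dyadic interval `[j 2^{-k}, (j+1) 2^{-k})`. -/
noncomputable def dyadicI (k j : ℤ) : Set ℝ :=
  Set.Ico ((j : ℝ) * (2 : ℝ) ^ (-k)) (((j : ℝ) + 1) * (2 : ℝ) ^ (-k))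

/-- The dyadic maximal operator relative to the measure `μ` (with the convention
`0/0 = 0` built into `ENNReal` division). -/
noncomputable def dyadicMax (μ : Measure ℝ) (f : ℝ → ℝ≥0∞) (x : ℝ) : ℝ≥0∞ :=
  ⨆ (k : ℤ) (j : ℤ) (_ : x ∈ dyadicI k j),
    (∫⁻ y in dyadicI k j, f y ∂μ) / μ (dyadicI k j)

lemma mem_dyadicI_iff {k j : ℤ} {x : ℝ} : x ∈ dyadicI k j ↔ ⌊x * 2 ^ k⌋ = j := by
  have h2 : (0 : ℝ) < 2 ^ k := zpow_pos two_pos k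
  simp only [dyadicI, mem_Ico, zpow_neg, ← div_eq_mul_inv, Int.floor_eq_iff,
    div_le_iff₀ h2, lt_div_iff₀ h2]

lemma measurableSet_dyadicI (k j : ℤ) : MeasurableSet (dyadicI k j) :=
  measurableSet_Ico

lemma floor_mul_zpow_two_eq_of_le {x y : ℝ} {k k' : ℤ} (hk : k' ≤ k)
    (h : ⌊x * 2 ^ k⌋ = ⌊y * 2 ^ k⌋) : ⌊x * 2 ^ k'⌋ = ⌊y * 2 ^ k'⌋ := by
  have hscale : ∀ z : ℝ, z * 2 ^ k' = z * 2 ^ k / ((2 ^ (k - k').toNat : ℕ) : ℝ) := by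
    intro z
    rw [Nat.cast_pow, Nat.cast_ofNat, ← zpow_natCast, Int.toNat_of_nonneg (sub_nonneg.2 hk),
      mul_div_assoc, ← zpow_sub₀ two_ne_zero, show k - (k - k') = k' by omega]
  rw [hscale x, hscale y, Int.floor_div_natCast, Int.floor_div_natCast, h]

lemma le_dyadicMax (μ : Measure ℝ) (f : ℝ → ℝ≥0∞) {k j : ℤ} {x : ℝ} (hx : x ∈ dyadicI k j) :
    (∫⁻ y in dyadicI k j, f y ∂μ) / μ (dyadicI k j) ≤ dyadicMax μ f x :=
  le_iSup_of_le k (le_iSup_of_le j (le_iSup_of_le hx le_rfl))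

lemma setOf_lt_dyadicMax (μ : Measure ℝ) (f : ℝ → ℝ≥0∞) (lam : ℝ≥0∞) :
    {x | lam < dyadicMax μ f x} =
      ⋃ (k : ℤ) (j : ℤ) (_ : lam < (∫⁻ y in dyadicI k j, f y ∂μ) / μ (dyadicI k j)),
        dyadicI k j := by
  ext x
  simp only [dyadicMax, mem_ofPred_eq, lt_iSup_iff, mem_iUnion, exists_prop, and_comm]

lemma setLIntegral_le_inv_mul_of_lt_div {α : Type*} [MeasurableSpace α] {μ : Measure α}
    {s : Set α} (hs : MeasurableSet s) {g w M : α → ℝ≥0∞} {lam : ℝ≥0∞}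
    (hlam : lam < (∫⁻ x in s, g x ∂μ) / μ s)
    (hM : ∀ x ∈ s, (∫⁻ y in s, w y ∂μ) / μ s ≤ M x) :
    ∫⁻ x in s, w x ∂μ ≤ lam⁻¹ * ∫⁻ x in s, g x * M x ∂μ := by
  set G := ∫⁻ x in s, g x ∂μ
  set W := ∫⁻ x in s, w x ∂μ
  -- by the conventions of division in `ℝ≥0∞`, `hlam` forces `G ≠ 0` and `0 < μ s < ⊤`
  have hG : G ≠ 0 := by rintro hG; simp [hG] at hlam
  have hs0 : μ s ≠ 0 := fun h0 => hG (setLIntegral_measure_zero s g h0)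
  have hstop : μ s ≠ ⊤ := by rintro htop; simp [htop] at hlam
  have hsG : μ s ≤ lam⁻¹ * G := by
    rw [mul_comm, ← div_eq_mul_inv,
      ENNReal.le_div_iff_mul_le (Or.inr hG) (Or.inl (ne_top_of_lt hlam)), mul_comm,
      ← ENNReal.le_div_iff_mul_le (Or.inl hs0) (Or.inl hstop)]
    exact hlam.le
  calc W = W / μ s * μ s := (ENNReal.div_mul_cancel hs0 hstop).symm
    _ ≤ W / μ s * (lam⁻¹ * G) := by gcongr
    _ = lam⁻¹ * (W / μ s * G) := by ring
    _ ≤ lam⁻¹ * ∫⁻ x in s, W / μ s * g x ∂μ := by gcongr; exact lintegral_const_mul_le _ _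
    _ ≤ lam⁻¹ * ∫⁻ x in s, g x * M x ∂μ := by
      refine mul_le_mul_right (setLIntegral_mono' hs fun x hx => ?_) _
      rw [mul_comm]
      gcongr
      exact hM x hx

section StoppingCubes

variable (P : ℤ → ℤ → Prop) (N : ℤ)

/-- The maximal cubes of generation `≥ N` satisfying `P`; the generation-`k` cube through `x` has
index `⌊x * 2 ^ k⌋` (`mem_dyadicI_iff`). -/
def stoppingCubes : Set (ℤ × ℤ) :=
  {p | N ≤ p.1 ∧ P p.1 p.2 ∧ ∀ k, N ≤ k → k < p.1 → ∀ x ∈ dyadicI p.1 p.2, ¬ P k ⌊x * 2 ^ k⌋}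

variable {P N}

lemma eq_of_mem_stoppingCubes {p q : ℤ × ℤ} (hp : p ∈ stoppingCubes P N)
    (hq : q ∈ stoppingCubes P N) (hle : p.1 ≤ q.1) {x : ℝ} (hxp : x ∈ dyadicI p.1 p.2)
    (hxq : x ∈ dyadicI q.1 q.2) : p = q := by
  rw [mem_dyadicI_iff] at hxp hxq
  obtain hlt | heq := hle.lt_or_eq
  · exact absurd (hxp ▸ hp.2.1) (hq.2.2 p.1 hp.1 hlt x (mem_dyadicI_iff.2 hxq))
  · exact Prod.ext heq (by rw [← hxp, ← hxq, heq])

variable (P N)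

lemma pairwiseDisjoint_stoppingCubes :
    (stoppingCubes P N).PairwiseDisjoint fun p => dyadicI p.1 p.2 := by
  intro p hp q hq hpq
  refine Set.disjoint_left.2 fun x hxp hxq => hpq ?_
  rcases le_total p.1 q.1 with hle | hle
  · exact eq_of_mem_stoppingCubes hp hq hle hxp hxq
  · exact (eq_of_mem_stoppingCubes hq hp hle hxq hxp).symm

lemma iUnion_dyadicI_subset_biUnion_stoppingCubes :
    ⋃ (k : ℤ) (_ : N ≤ k) (j : ℤ) (_ : P k j), dyadicI k j ⊆
      ⋃ p ∈ stoppingCubes P N, dyadicI p.1 p.2 := by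
  simp only [iUnion_subset_iff]
  intro k hk j hkj x hx
  obtain ⟨k₀, ⟨hk₀, hPk₀⟩, hmin⟩ := Int.exists_least_of_bdd
    (P := fun k => N ≤ k ∧ P k ⌊x * 2 ^ k⌋) ⟨N, fun _ h => h.1⟩
    ⟨k, hk, (mem_dyadicI_iff.1 hx).symm ▸ hkj⟩
  refine mem_biUnion (x := (k₀, ⌊x * 2 ^ k₀⌋)) ⟨hk₀, hPk₀, ?_⟩ (mem_dyadicI_iff.2 rfl)
  intro k' hk' hlt z hz hPz
  rw [floor_mul_zpow_two_eq_of_le hlt.le (mem_dyadicI_iff.1 hz)] at hPz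
  exact hlt.not_ge (hmin k' ⟨hk', hPz⟩)

end StoppingCubes

theorem setLIntegral_iUnion_dyadicI_le {μ : Measure ℝ} {P : ℤ → ℤ → Prop} {w v : ℝ → ℝ≥0∞}
    {C : ℝ≥0∞}
    (hP : ∀ k j, P k j → ∫⁻ x in dyadicI k j, w x ∂μ ≤ C * ∫⁻ x in dyadicI k j, v x ∂μ) :
    ∫⁻ x in ⋃ (k : ℤ) (j : ℤ) (_ : P k j), dyadicI k j, w x ∂μ ≤ C * ∫⁻ x, v x ∂μ := by
  set A : ℤ → Set ℝ := fun N => ⋃ (k : ℤ) (_ : N ≤ k) (j : ℤ) (_ : P k j), dyadicI k j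
  have hA : ⋃ (k : ℤ) (j : ℤ) (_ : P k j), dyadicI k j = ⋃ N, A N := by
    ext x
    simp only [A, mem_iUnion, exists_prop]
    exact ⟨fun ⟨k, hk⟩ => ⟨k, k, le_rfl, hk⟩, fun ⟨_, k, _, hk⟩ => ⟨k, hk⟩⟩
  have hA_anti : Antitone A := fun N N' hN =>
    biUnion_mono (fun k hk => le_trans hN hk) fun _ _ => subset_rfl
  rw [hA, setLIntegral_iUnion_of_directed _ hA_anti.directed_le]
  refine iSup_le fun N => ?_
  have hcount : (stoppingCubes P N).Countable := Set.to_countable _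
  calc ∫⁻ x in A N, w x ∂μ
      ≤ ∫⁻ x in ⋃ p ∈ stoppingCubes P N, dyadicI p.1 p.2, w x ∂μ :=
        lintegral_mono_set (iUnion_dyadicI_subset_biUnion_stoppingCubes P N)
    _ = ∑' p : stoppingCubes P N, ∫⁻ x in dyadicI p.1.1 p.1.2, w x ∂μ :=
        lintegral_biUnion hcount (fun p _ => measurableSet_dyadicI _ _)
          (pairwiseDisjoint_stoppingCubes P N) w
    _ ≤ ∑' p : stoppingCubes P N, C * ∫⁻ x in dyadicI p.1.1 p.1.2, v x ∂μ :=
        ENNReal.tsum_le_tsum fun p => hP _ _ p.2.2.1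
    _ = C * ∫⁻ x in ⋃ p ∈ stoppingCubes P N, dyadicI p.1 p.2, v x ∂μ := by
        rw [ENNReal.tsum_mul_left, lintegral_biUnion hcount (fun p _ => measurableSet_dyadicI _ _)
          (pairwiseDisjoint_stoppingCubes P N) v]
    _ ≤ C * ∫⁻ x, v x ∂μ := mul_le_mul_right (setLIntegral_le_lintegral _ _) _

theorem stmt1 (μ : Measure ℝ) (lam : ℝ≥0)
    (w : ℝ → ℝ≥0∞) (f : ℝ → ℝ) :
    (∫⁻ x in {x | (lam : ℝ≥0∞) < dyadicMax μ (fun y => (‖f y‖₊ : ℝ≥0∞)) x}, w x ∂μ)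
      ≤ (1 / (lam : ℝ≥0∞)) * ∫⁻ x, (‖f x‖₊ : ℝ≥0∞) * dyadicMax μ w x ∂μ := by
  rw [setOf_lt_dyadicMax, one_div]
  exact setLIntegral_iUnion_dyadicI_le fun k j hkj =>
    setLIntegral_le_inv_mul_of_lt_div (measurableSet_dyadicI k j) hkj fun _ hx =>
      le_dyadicMax μ w hx
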